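/- arXiv:2308.14464 — 4 statements merged into one kernel-verified Lean document; each statement's English description precedes it below -/
import Mathlib

section
/- Let d > 0, M ≥ 0, and let μ : ℝ → ℝ be a function that is twice differentiable on [d, ∞) and on (−∞, −d]. Define τ_Lin(d) = μ(d) − μ(−d) − d·(μ'(d) + μ'(−d)). Suppose m : ℝ → ℝ agrees with μ on {x : |x| ≥ d}, is twice differentiable on [0, ∞) and on (−∞, 0) (with one-sided limits m₊ = lim_{x→0⁺} m(x) and m₋ = lim_{x→0⁻} m(x) existing), and satisfies |m''(x)| ≤ M for all x ≠ 0. Then |(m₊ − m₋) − τ_Lin(d)| ≤ M·d². -/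
open Set Filter Topology

/-- Mean value bound for the first derivative on `[x, d] ⊆ (0, ∞)`. -/
lemma donut_mvt (d M : ℝ) (hM : 0 ≤ M) (f' f'' : ℝ → ℝ)
    (h2 : ∀ x ∈ Ioi (0 : ℝ), HasDerivWithinAt f' (f'' x) (Ioi 0) x)
    (hb : ∀ x ∈ Ioi (0 : ℝ), |f'' x| ≤ M)
    (x : ℝ) (hx : 0 < x) (hxd : x ≤ d) :
    |f' d - f' x| ≤ M * (d - x) := by
  have hsub : Icc x d ⊆ Ioi (0 : ℝ) := fun y hy => lt_of_lt_of_le hx hy.1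
  have := Convex.norm_image_sub_le_of_norm_hasDerivWithin_le
    (f := f') (f' := f'') (s := Icc x d) (C := M)
    (fun y hy => (h2 y (hsub hy)).mono hsub)
    (fun y hy => hb y (hsub hy)) (convex_Icc x d)
    (Set.left_mem_Icc.2 hxd) (Set.right_mem_Icc.2 hxd)
  simpa [Real.norm_eq_abs, abs_of_nonneg (sub_nonneg.2 hxd)] using this

/-- Second order Taylor bound with a one–sided limit at `0`. -/
lemma donut_key (d M : ℝ) (hd : 0 < d) (hM : 0 ≤ M) (f f' f'' : ℝ → ℝ)
    (h1 : ∀ x ∈ Ioi (0 : ℝ), HasDerivWithinAt f (f' x) (Ioi 0) x)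
    (h2 : ∀ x ∈ Ioi (0 : ℝ), HasDerivWithinAt f' (f'' x) (Ioi 0) x)
    (hb : ∀ x ∈ Ioi (0 : ℝ), |f'' x| ≤ M)
    (L : ℝ) (hL : Tendsto f (𝓝[>] 0) (𝓝 L)) :
    |L - f d + d * f' d| ≤ M * d ^ 2 / 2 := by
  -- the pointwise estimate for `ε ∈ (0, d)`
  have hstep : ∀ ε ∈ Ioo (0 : ℝ) d,
      |f ε - f d + (d - ε) * f' d| ≤ M * d ^ 2 / 2 := by
    intro ε hε
    obtain ⟨hε0, hεd⟩ := hε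
    have hIcc : Icc ε d ⊆ Ioi (0 : ℝ) := fun y hy => lt_of_lt_of_le hε0 hy.1
    have hconv : Convex ℝ (Icc ε d) := convex_Icc ε d
    have hint : interior (Icc ε d) = Ioo ε d := interior_Icc
    have hcf : ContinuousOn f (Icc ε d) := fun y hy =>
      ((h1 y (hIcc hy)).mono hIcc).continuousWithinAt
    -- derivative facts at interior points
    have hderivat : ∀ y ∈ Ioo ε d, HasDerivAt f (f' y) y := by
      intro y hy
      have hmem : Ioi (0 : ℝ) ∈ 𝓝 y := Ioi_mem_nhds (lt_of_lt_of_le hε0 hy.1.le)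
      exact (h1 y (lt_of_lt_of_le hε0 hy.1.le)).hasDerivAt hmem
    -- upper bound via a monotone auxiliary function
    have hup : f d - f ε - (d - ε) * f' d ≤ M / 2 * (d - ε) ^ 2 := by
      set φ : ℝ → ℝ := fun x => f d - f x - (d - x) * f' d - M / 2 * (d - x) ^ 2 with hφ
      have hφat : ∀ y ∈ Ioo ε d, HasDerivAt φ (f' d - f' y + M * (d - y)) y := by
        intro y hy
        have h1' := hderivat y hy
        have hpoly : HasDerivAt (fun x : ℝ => f d - (d - x) * f' d - M / 2 * (d - x) ^ 2)
            (f' d + M * (d - y)) y := by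
          have hq : HasDerivAt (fun x : ℝ => d - x) (-1) y := by
            simpa using (hasDerivAt_id y).const_sub d
          have hq2 : HasDerivAt (fun x : ℝ => (d - x) ^ 2) (2 * (d - y) ^ 1 * (-1)) y :=
            hq.pow 2
          have := ((hq.mul_const (f' d)).const_sub (f d)).sub (hq2.const_mul (M / 2))
          exact this.congr_deriv (by ring)
        have hsum := hpoly.sub h1'
        have heq : φ = fun x => f d - (d - x) * f' d - M / 2 * (d - x) ^ 2 - f x := by
          funext x; simp only [hφ]; ring
        rw [heq]
        exact hsum.congr_deriv (by ring)
      have hmono : MonotoneOn φ (Icc ε d) := by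
        apply monotoneOn_of_deriv_nonneg hconv
        · apply ContinuousOn.sub
          apply ContinuousOn.sub
          apply ContinuousOn.sub
          · exact continuousOn_const
          · exact hcf
          · exact (continuousOn_const.sub continuousOn_id).mul continuousOn_const
          · exact continuousOn_const.mul ((continuousOn_const.sub continuousOn_id).pow 2)
        · rw [hint]
          intro y hy
          exact (hφat y hy).differentiableAt.differentiableWithinAt
        · rw [hint]
          intro y hy
          rw [(hφat y hy).deriv]
          have hmvt := donut_mvt d M hM f' f'' h2 hb y (lt_of_lt_of_le hε0 hy.1.le) hy.2.le
          have := abs_le.1 hmvt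
          nlinarith [this.1, this.2, hy.2.le, sub_nonneg.2 hy.2.le]
      have h0 : φ ε ≤ φ d :=
        hmono (Set.left_mem_Icc.2 hεd.le) (Set.right_mem_Icc.2 hεd.le) hεd.le
      have hφd : φ d = 0 := by simp [hφ]
      rw [hφd] at h0
      simp only [hφ] at h0
      nlinarith [h0]
    -- lower bound via an antitone auxiliary function
    have hdown : -(M / 2 * (d - ε) ^ 2) ≤ f d - f ε - (d - ε) * f' d := by
      set ψ : ℝ → ℝ := fun x => f d - f x - (d - x) * f' d + M / 2 * (d - x) ^ 2 with hψ
      have hψat : ∀ y ∈ Ioo ε d, HasDerivAt ψ (f' d - f' y - M * (d - y)) y := by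
        intro y hy
        have h1' := hderivat y hy
        have hpoly : HasDerivAt (fun x : ℝ => f d - (d - x) * f' d + M / 2 * (d - x) ^ 2)
            (f' d - M * (d - y)) y := by
          have hq : HasDerivAt (fun x : ℝ => d - x) (-1) y := by
            simpa using (hasDerivAt_id y).const_sub d
          have hq2 : HasDerivAt (fun x : ℝ => (d - x) ^ 2) (2 * (d - y) ^ 1 * (-1)) y :=
            hq.pow 2
          have := ((hq.mul_const (f' d)).const_sub (f d)).add (hq2.const_mul (M / 2))
          exact this.congr_deriv (by ring)
        have hsum := hpoly.sub h1'
        have heq : ψ = fun x => f d - (d - x) * f' d + M / 2 * (d - x) ^ 2 - f x := by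
          funext x; simp only [hψ]; ring
        rw [heq]
        exact hsum.congr_deriv (by ring)
      have hanti : AntitoneOn ψ (Icc ε d) := by
        apply antitoneOn_of_deriv_nonpos hconv
        · apply ContinuousOn.add
          apply ContinuousOn.sub
          apply ContinuousOn.sub
          · exact continuousOn_const
          · exact hcf
          · exact (continuousOn_const.sub continuousOn_id).mul continuousOn_const
          · exact continuousOn_const.mul ((continuousOn_const.sub continuousOn_id).pow 2)
        · rw [hint]
          intro y hy
          exact (hψat y hy).differentiableAt.differentiableWithinAt
        · rw [hint]
          intro y hy
          rw [(hψat y hy).deriv]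
          have hmvt := donut_mvt d M hM f' f'' h2 hb y (lt_of_lt_of_le hε0 hy.1.le) hy.2.le
          have := abs_le.1 hmvt
          nlinarith [this.1, this.2, sub_nonneg.2 hy.2.le]
      have h0 : ψ d ≤ ψ ε :=
        hanti (Set.left_mem_Icc.2 hεd.le) (Set.right_mem_Icc.2 hεd.le) hεd.le
      have hψd : ψ d = 0 := by simp [hψ]
      rw [hψd] at h0
      simp only [hψ] at h0
      nlinarith [h0]
    have hbnd : |f ε - f d + (d - ε) * f' d| ≤ M / 2 * (d - ε) ^ 2 := by
      rw [abs_le]; constructor <;> nlinarith [hup, hdown]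
    have hle : M / 2 * (d - ε) ^ 2 ≤ M * d ^ 2 / 2 := by nlinarith [hM, hε0, hεd, mul_nonneg hM hε0.le]
    linarith [hbnd, hle]
  -- take the limit ε → 0⁺
  have htend : Tendsto (fun ε => f ε - f d + (d - ε) * f' d) (𝓝[>] (0 : ℝ))
      (𝓝 (L - f d + d * f' d)) := by
    have h1 : Tendsto (fun ε : ℝ => (d - ε) * f' d) (𝓝[>] (0 : ℝ)) (𝓝 (d * f' d)) := by
      have : Tendsto (fun ε : ℝ => (d - ε) * f' d) (𝓝 (0 : ℝ)) (𝓝 ((d - 0) * f' d)) := by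
        exact ((continuous_const.sub continuous_id).mul continuous_const).tendsto 0
      simpa using this.mono_left nhdsWithin_le_nhds
    exact (hL.sub_const (f d)).add h1
  have habs : Tendsto (fun ε => |f ε - f d + (d - ε) * f' d|) (𝓝[>] (0 : ℝ))
      (𝓝 |L - f d + d * f' d|) := htend.abs
  refine le_of_tendsto habs ?_
  filter_upwards [Ioo_mem_nhdsGT_of_mem ⟨le_refl (0 : ℝ), hd⟩] with ε hε
  exact hstep ε hε

/-- Every element of the donut RD identified set lies within `M * d ^ 2` of the
linear extrapolation `τ_Lin(d) = μ(d) − μ(−d) − d (μ'(d) + μ'(−d))`. -/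
theorem donut_identified_set_bound
    (d M : ℝ) (hd : 0 < d) (hM : 0 ≤ M)
    (μ μ' μ'' : ℝ → ℝ)
    (hμ1p : ∀ x ∈ Ici d, HasDerivWithinAt μ (μ' x) (Ici d) x)
    (hμ2p : ∀ x ∈ Ici d, HasDerivWithinAt μ' (μ'' x) (Ici d) x)
    (hμ1m : ∀ x ∈ Iic (-d), HasDerivWithinAt μ (μ' x) (Iic (-d)) x)
    (hμ2m : ∀ x ∈ Iic (-d), HasDerivWithinAt μ' (μ'' x) (Iic (-d)) x)
    (m m' m'' : ℝ → ℝ)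
    (hagree : ∀ x : ℝ, d ≤ |x| → m x = μ x)
    (hm1p : ∀ x ∈ Ici (0 : ℝ), HasDerivWithinAt m (m' x) (Ici 0) x)
    (hm2p : ∀ x ∈ Ici (0 : ℝ), HasDerivWithinAt m' (m'' x) (Ici 0) x)
    (hm1m : ∀ x ∈ Iio (0 : ℝ), HasDerivWithinAt m (m' x) (Iio 0) x)
    (hm2m : ∀ x ∈ Iio (0 : ℝ), HasDerivWithinAt m' (m'' x) (Iio 0) x)
    (hbound : ∀ x : ℝ, x ≠ 0 → |m'' x| ≤ M)
    (mplus mminus : ℝ)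
    (hplus : Tendsto m (𝓝[>] 0) (𝓝 mplus))
    (hminus : Tendsto m (𝓝[<] 0) (𝓝 mminus)) :
    |(mplus - mminus) - (μ d - μ (-d) - d * (μ' d + μ' (-d)))| ≤ M * d ^ 2 := by
  -- agreement of values
  have hmd : m d = μ d := hagree d (by rw [abs_of_pos hd])
  have hmnd : m (-d) = μ (-d) := hagree (-d) (by rw [abs_neg, abs_of_pos hd])
  -- agreement of derivatives at ±d
  have hm'd : m' d = μ' d := by
    have hA : HasDerivWithinAt m (m' d) (Ici d) d :=
      (hm1p d hd.le).mono (Ici_subset_Ici.2 hd.le)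
    have hA' : HasDerivWithinAt μ (m' d) (Ici d) d := by
      refine hA.congr ?_ hmd.symm
      intro x hx
      exact (hagree x (by rw [abs_of_pos (lt_of_lt_of_le hd hx)]; exact hx)).symm
    have hu : UniqueDiffWithinAt ℝ (Ici d) d := uniqueDiffOn_Ici d d self_mem_Ici
    have := hA'.derivWithin hu
    rw [← this, (hμ1p d self_mem_Ici).derivWithin hu]
  have hm'nd : m' (-d) = μ' (-d) := by
    have hndlt : (-d : ℝ) < 0 := neg_lt_zero.2 hd
    have hA : HasDerivWithinAt m (m' (-d)) (Iic (-d)) (-d) :=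
      (hm1m (-d) hndlt).mono (fun x hx => lt_of_le_of_lt hx hndlt)
    have hA' : HasDerivWithinAt μ (m' (-d)) (Iic (-d)) (-d) := by
      refine hA.congr ?_ hmnd.symm
      intro x hx
      refine (hagree x ?_).symm
      have hx' : x ≤ -d := hx
      rw [abs_of_nonpos (le_trans hx' (neg_nonpos.2 hd.le))]
      linarith
    have hu : UniqueDiffWithinAt ℝ (Iic (-d)) (-d) := uniqueDiffOn_Iic (-d) (-d) self_mem_Iic
    have := hA'.derivWithin hu
    rw [← this, (hμ1m (-d) self_mem_Iic).derivWithin hu]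
  -- right-side bound via the key lemma
  have hIoi : ∀ x ∈ Ioi (0 : ℝ), x ∈ Ici (0 : ℝ) := fun x hx => mem_Ici.2 (le_of_lt hx)
  have hright : |mplus - m d + d * m' d| ≤ M * d ^ 2 / 2 := by
    refine donut_key d M hd hM m m' m''
      (fun x hx => (hm1p x (hIoi x hx)).mono Ioi_subset_Ici_self)
      (fun x hx => (hm2p x (hIoi x hx)).mono Ioi_subset_Ici_self)
      (fun x hx => hbound x (ne_of_gt hx)) mplus hplus
  -- left-side bound via reflection
  have hleft : |mminus - m (-d) - d * m' (-d)| ≤ M * d ^ 2 / 2 := by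
    have hnegmap : ∀ x ∈ Ioi (0 : ℝ), -x ∈ Iio (0 : ℝ) := fun x hx => mem_Iio.2 (neg_neg_iff_pos.2 hx)
    have hnegderiv : HasDerivAt (fun x : ℝ => -x) (-1) 0 := by
      exact hasDerivAt_neg' 0
    have h1 : ∀ x ∈ Ioi (0 : ℝ),
        HasDerivWithinAt (fun x => m (-x)) (-m' (-x)) (Ioi 0) x := by
      intro x hx
      have hneg : HasDerivWithinAt (fun x : ℝ => -x) (-1) (Ioi 0) x :=
        (hasDerivAt_neg' x).hasDerivWithinAt
      have := HasDerivWithinAt.scomp x (hm1m (-x) (hnegmap x hx)) hneg hnegmap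
      exact this.congr_deriv (by ring)
    have h2 : ∀ x ∈ Ioi (0 : ℝ),
        HasDerivWithinAt (fun x => -m' (-x)) (m'' (-x)) (Ioi 0) x := by
      intro x hx
      have hneg : HasDerivWithinAt (fun x : ℝ => -x) (-1) (Ioi 0) x :=
        (hasDerivAt_neg' x).hasDerivWithinAt
      have := (HasDerivWithinAt.scomp x (hm2m (-x) (hnegmap x hx)) hneg hnegmap).neg
      exact this.congr_deriv (by ring)
    have hb : ∀ x ∈ Ioi (0 : ℝ), |m'' (-x)| ≤ M := fun x hx =>
      hbound (-x) (ne_of_lt (hnegmap x hx))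
    have hLt : Tendsto (fun x => m (-x)) (𝓝[>] (0 : ℝ)) (𝓝 mminus) := by
      have hnegtend : Tendsto (fun x : ℝ => -x) (𝓝[>] (0 : ℝ)) (𝓝[<] (0 : ℝ)) := by
        rw [tendsto_nhdsWithin_iff]
        constructor
        · simpa using (continuous_neg.tendsto (0 : ℝ)).mono_left nhdsWithin_le_nhds
        · filter_upwards [self_mem_nhdsWithin] with x hx
          exact neg_neg_iff_pos.2 (mem_Ioi.1 hx)
      exact hminus.comp hnegtend
    have := donut_key d M hd hM (fun x => m (-x)) (fun x => -m' (-x)) (fun x => m'' (-x))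
      h1 h2 hb mminus hLt
    have heq : mminus - m (-d) + d * -m' (-d) = mminus - m (-d) - d * m' (-d) := by ring
    rwa [heq] at this
  -- combine
  have hcomb : (mplus - mminus) - (μ d - μ (-d) - d * (μ' d + μ' (-d)))
      = (mplus - m d + d * m' d) - (mminus - m (-d) - d * m' (-d)) := by
    rw [hmd, hmnd, hm'd, hm'nd]; ring
  rw [hcomb]
  calc |(mplus - m d + d * m' d) - (mminus - m (-d) - d * m' (-d))|
      ≤ |mplus - m d + d * m' d| + |mminus - m (-d) - d * m' (-d)| := abs_sub _ _
    _ ≤ M * d ^ 2 / 2 + M * d ^ 2 / 2 := add_le_add hright hleft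
    _ = M * d ^ 2 := by ring
end

section
/- For the uniform kernel K(t) = (1/2)·1{|t| ≤ 1} and any c ∈ [0, 1), the bias constant satisfies B_K(c) = (m₂² − m₁·m₃)/(m₀·m₂ − m₁²) with m₀ = (1−c)/2, m₁ = (1−c²)/4, m₂ = (1−c³)/6, m₃ = (1−c⁴)/8, and in particular B_K(c)/B_K(0) > 1 for all c ∈ (0, 1) — that is, |B_K(c)| > |B_K(0)| = 1/6, so the donut strictly increases the asymptotic bias constant in absolute value. -/
open intervalIntegral

/-- For the uniform kernel, the donut bias constant satisfies the explicit moment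
formula, and a positive donut strictly increases the asymptotic bias constant in
absolute value: `|B_K(c)| > |B_K(0)| = 1/6` for all `c ∈ (0,1)`. -/
theorem uniform_kernel_donut_bias_increase
    (c : ℝ) (hc0 : 0 ≤ c) (hc1 : c < 1)
    (m0 m1 m2 m3 D B : ℝ)
    (hm0 : m0 = (1 - c) / 2)
    (hm1 : m1 = (1 - c ^ 2) / 4)
    (hm2 : m2 = (1 - c ^ 3) / 6)
    (hm3 : m3 = (1 - c ^ 4) / 8)
    (hD : D = m0 * m2 - m1 ^ 2)
    (hB : B = ∫ u in c..1, ((m2 - u * m1) / D) * (1 / 2) * u ^ 2) :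
    B = (m2 ^ 2 - m1 * m3) / D ∧ (0 < c → 1 / 6 < |B|) := by
  have h1c : (0:ℝ) < 1 - c := by linarith
  have hDval : D = (1 - c) ^ 4 / 48 := by rw [hD, hm0, hm1, hm2]; ring
  have hDpos : 0 < D := by rw [hDval]; positivity
  have hDne : D ≠ 0 := ne_of_gt hDpos
  have hint : B = m2 / (2 * D) * ((1 ^ 3 - c ^ 3) / 3)
      - m1 / (2 * D) * ((1 ^ 4 - c ^ 4) / 4) := by
    rw [hB]
    have heq : ∀ u : ℝ, ((m2 - u * m1) / D) * (1 / 2) * u ^ 2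
        = m2 / (2 * D) * u ^ 2 - m1 / (2 * D) * u ^ 3 := fun u => by ring
    simp_rw [heq]
    rw [intervalIntegral.integral_sub ((intervalIntegrable_pow 2).const_mul _)
      ((intervalIntegrable_pow 3).const_mul _),
      intervalIntegral.integral_const_mul, intervalIntegral.integral_const_mul,
      integral_pow, integral_pow]
    norm_num
  have hBval : B = -(1 + 4 * c + c ^ 2) / 6 := by
    rw [hint, hm1, hm2, hDval]
    have h4 : (1 - c) ^ 4 ≠ 0 := by positivity
    field_simp
    ring
  constructor
  · rw [hint, hm2, hm3]
    field_simp
    ring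
  · intro hcpos
    have : |B| = (1 + 4 * c + c ^ 2) / 6 := by
      rw [hBval, abs_of_nonpos (by nlinarith)]
      ring
    rw [this]
    nlinarith
end

section
/- Let Z be standard normal, let B ≥ 0, let b ∈ ℝ with |b| ≤ B, and let T = Z + b. Let cv_{1−α}(B) denote the 1−α quantile of |Z + B|. Then P(|T| ≤ cv_{1−α}(B)) ≥ 1 − α. -/
/-!
The event `|z + b| ≤ c` is a window of half-width `c` centred at `-b`. For a centred Gaussian
the mass of such a window decreases with the distance `|b|` of its centre from the origin:
moving the centre outwards trades a strip near the origin for its translate by `2c` further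
out, where the density is smaller. So the coverage under the bias `b` is at least the coverage
under the worst-case bias `B`, and the latter is at least `1 - α` at `cv` because
`t ↦ P(|Z + B| ≤ t)` is right-continuous, so that the infimum defining the quantile is attained.
-/

open MeasureTheory ProbabilityTheory Filter Set
open scoped NNReal ENNReal

theorem le_measure_setOf_le_sInf {α : Type*} [MeasurableSpace α] (μ : Measure α)
    [IsFiniteMeasure μ] {f : α → ℝ} (hf : Measurable f) {p : ℝ≥0∞} (hp₀ : p ≠ 0)
    (hp : p < μ univ) :
    p ≤ μ {x | f x ≤ sInf {t | p ≤ μ {x | f x ≤ t}}} := by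
  set S := {t | p ≤ μ {x | f x ≤ t}}
  have hmono : Monotone fun t : ℝ => {x | f x ≤ t} := fun s t hst x hx => le_trans hx hst
  have hmeas : ∀ t : ℝ, MeasurableSet {x | f x ≤ t} := fun _ =>
    measurableSet_le hf measurable_const
  have hne : S.Nonempty := by
    have hlim := tendsto_measure_iUnion_atTop (μ := μ) hmono
    have hunion : ⋃ t : ℝ, {x | f x ≤ t} = univ :=
      eq_univ_of_forall fun x => mem_iUnion.2 ⟨f x, le_refl (f x)⟩
    rw [hunion] at hlim
    obtain ⟨t, ht⟩ := (hlim.eventually (lt_mem_nhds hp)).exists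
    exact ⟨t, ht.le⟩
  have hbdd : BddBelow S := by
    have hlim := tendsto_measure_iInter_atBot (μ := μ) (fun t => (hmeas t).nullMeasurableSet)
      hmono ⟨0, measure_ne_top _ _⟩
    have hinter : ⋂ t : ℝ, {x | f x ≤ t} = ∅ :=
      eq_empty_of_forall_notMem fun x hx => by
        have : f x ≤ f x - 1 := mem_iInter.1 hx (f x - 1)
        linarith
    rw [hinter, measure_empty] at hlim
    obtain ⟨t₀, ht₀⟩ :=
      eventually_atBot.1 (hlim.eventually (gt_mem_nhds (pos_iff_ne_zero.2 hp₀)))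
    refine ⟨t₀, fun t ht => le_of_not_gt fun htt₀ => ?_⟩
    exact (ht₀ t htt₀.le).not_ge ht
  have hright := tendsto_measure_biInter_gt (μ := μ) (a := sInf S)
    (fun r _ => (hmeas r).nullMeasurableSet) (fun i j _ hij => hmono hij)
    ⟨sInf S + 1, by linarith, measure_ne_top _ _⟩
  have hinter : ⋂ r > sInf S, {x | f x ≤ r} = {x | f x ≤ sInf S} := by
    ext x
    simp only [mem_iInter]
    exact ⟨le_of_forall_gt_imp_ge_of_dense, fun h r hr => h.trans hr.le⟩
  rw [hinter] at hright
  refine ge_of_tendsto hright (eventually_nhdsWithin_of_forall fun r hr => ?_)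
  obtain ⟨t, htS, htr⟩ := exists_lt_of_csInf_lt hne hr
  exact htS.trans (measure_mono (hmono htr.le))

section Gaussian

variable {v : ℝ≥0}

theorem gaussianPDFReal_zero_le_of_abs_le {x y : ℝ} (h : |x| ≤ |y|) :
    gaussianPDFReal 0 v y ≤ gaussianPDFReal 0 v x := by
  rw [gaussianPDFReal, gaussianPDFReal]
  gcongr _ * Real.exp (-?_ / _)
  simpa only [sub_zero] using sq_le_sq.2 h

theorem intervalIntegral_gaussianPDFReal_window_le {c b B : ℝ} (hc : 0 ≤ c) (hb : 0 ≤ b)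
    (hbB : b ≤ B) :
    ∫ x in (-c - B)..(c - B), gaussianPDFReal 0 v x
      ≤ ∫ x in (-c - b)..(c - b), gaussianPDFReal 0 v x := by
  have hint : ∀ a a' : ℝ, IntervalIntegrable (gaussianPDFReal 0 v) volume a a' :=
    fun _ _ => (integrable_gaussianPDFReal 0 v).intervalIntegrable
  -- The outer window gains the strip `[-c-B, -c-b]`, the translate by `-2c` of the strip
  -- `[c-B, c-b]` it loses, and this translation moves every point away from the origin.
  have hreflect : ∫ x in (-c - B)..(-c - b), gaussianPDFReal 0 v x
      ≤ ∫ x in (c - B)..(c - b), gaussianPDFReal 0 v x := by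
    have hshift : ∫ x in (c - B)..(c - b), gaussianPDFReal 0 v (x - 2 * c)
        = ∫ x in (-c - B)..(-c - b), gaussianPDFReal 0 v x := by
      rw [intervalIntegral.integral_comp_sub_right]
      congr 1 <;> ring
    rw [← hshift]
    refine intervalIntegral.integral_mono_on (by linarith)
      ((integrable_gaussianPDFReal 0 v).comp_sub_right (2 * c)).intervalIntegrable (hint _ _)
      fun x hx => gaussianPDFReal_zero_le_of_abs_le (sq_le_sq.1 ?_)
    nlinarith [mul_nonneg hc (show 0 ≤ c - x by linarith [hx.2])]
  have hsplit := intervalIntegral.integral_interval_sub_interval_comm (hint (-c - B) (c - B))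
    (hint (-c - b) (c - b)) (hint (-c - B) (-c - b))
  linarith

theorem gaussianReal_zero_setOf_abs_add_neg_le_eq (b c : ℝ) :
    gaussianReal 0 v {z | |z + -b| ≤ c} = gaussianReal 0 v {z | |z + b| ≤ c} := by
  have hsymm := gaussianReal_map_neg (μ := 0) (v := v)
  rw [neg_zero] at hsymm
  conv_rhs => rw [← hsymm]
  rw [Measure.map_apply measurable_neg (measurableSet_le (by fun_prop) measurable_const)]
  congr 1
  ext z
  change |z + -b| ≤ c ↔ |-z + b| ≤ c
  rw [neg_add_eq_sub, ← sub_eq_add_neg, abs_sub_comm]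

theorem gaussianReal_zero_setOf_abs_add_le_eq_ofReal_integral (hv : v ≠ 0) {c : ℝ}
    (hc : 0 ≤ c) (m : ℝ) :
    gaussianReal 0 v {z | |z + m| ≤ c}
      = ENNReal.ofReal (∫ x in (-c - m)..(c - m), gaussianPDFReal 0 v x) := by
  have hIcc : {z : ℝ | |z + m| ≤ c} = Icc (-c - m) (c - m) := by
    ext z
    simp only [mem_ofPred_eq, mem_Icc, abs_le]
    constructor <;> rintro ⟨h₁, h₂⟩ <;> constructor <;> linarith
  rw [hIcc, gaussianReal_apply_eq_integral 0 hv, intervalIntegral.integral_of_le (by linarith),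
    integral_Icc_eq_integral_Ioc]

theorem gaussianReal_zero_setOf_abs_add_le_anti (hv : v ≠ 0) {b B : ℝ} (hb : |b| ≤ B)
    (c : ℝ) :
    gaussianReal 0 v {z | |z + B| ≤ c} ≤ gaussianReal 0 v {z | |z + b| ≤ c} := by
  rcases lt_or_ge c 0 with hc | hc
  · have hempty : {z : ℝ | |z + B| ≤ c} = ∅ :=
      eq_empty_of_forall_notMem fun z hz => (abs_nonneg _).not_gt (lt_of_le_of_lt hz hc)
    simp [hempty]
  wlog hb₀ : 0 ≤ b generalizing b
  · rw [← gaussianReal_zero_setOf_abs_add_neg_le_eq b]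
    exact this (by rwa [abs_neg]) (by linarith)
  rw [gaussianReal_zero_setOf_abs_add_le_eq_ofReal_integral hv hc,
    gaussianReal_zero_setOf_abs_add_le_eq_ofReal_integral hv hc]
  exact ENNReal.ofReal_le_ofReal
    (intervalIntegral_gaussianPDFReal_window_le hc hb₀ ((le_abs_self b).trans hb))

end Gaussian

theorem bias_aware_coverage_general
    (α : ℝ) (hα : α ∈ Set.Ioo (0 : ℝ) 1)
    (B b : ℝ) (hb : |b| ≤ B)
    (cv : ℝ)
    (hcv : cv = sInf {t : ℝ |
      ENNReal.ofReal (1 - α) ≤ gaussianReal 0 1 {z : ℝ | |z + B| ≤ t}}) :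
    ENNReal.ofReal (1 - α) ≤ gaussianReal 0 1 {z : ℝ | |z + b| ≤ cv} := by
  obtain ⟨hα₀, hα₁⟩ := hα
  have hlevel₀ : ENNReal.ofReal (1 - α) ≠ 0 := by
    rw [Ne, ENNReal.ofReal_eq_zero, not_le]
    linarith
  have hlevel₁ : ENNReal.ofReal (1 - α) < gaussianReal 0 1 univ := by
    rw [measure_univ, ENNReal.ofReal_lt_one]
    linarith
  have hquantile := le_measure_setOf_le_sInf (gaussianReal 0 1) (f := fun z => |z + B|)
    (by fun_prop) hlevel₀ hlevel₁
  rw [← hcv] at hquantile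
  exact hquantile.trans (gaussianReal_zero_setOf_abs_add_le_anti one_ne_zero hb cv)

/-- Coverage guarantee for bias-aware inference: if `T = Z + b` with `Z` standard
normal and `|b| ≤ B`, then `P(|T| ≤ cv_{1−α}(B)) ≥ 1 − α`, where `cv_{1−α}(B)` is the
`1−α` quantile of `|Z + B|`. -/
theorem bias_aware_coverage
    (α : ℝ) (hα : α ∈ Set.Ioo (0 : ℝ) 1)
    (B b : ℝ) (hB : 0 ≤ B) (hb : |b| ≤ B)
    (cv : ℝ)
    (hcv : cv = sInf {t : ℝ |
      ENNReal.ofReal (1 - α) ≤ gaussianReal 0 1 {z : ℝ | |z + B| ≤ t}}) :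
    ENNReal.ofReal (1 - α) ≤ gaussianReal 0 1 {z : ℝ | |z + b| ≤ cv} :=
  bias_aware_coverage_general α hα B b hb cv hcv
end

section
/- Let Z be standard normal, α ∈ (0,1), and for r ≥ 0 let cv_{1−α}(r) be the 1−α quantile of |Z + r|. Then for all r ≥ 0, cv_{1−α}(r) ≤ r + z_{1−α/2} and cv_{1−α}(r) ≥ max(r + z_{1−α} , z_{1−α/2}) − where z_q denotes the q-quantile of Z; in particular cv_{1−α}(r) − r → z_{1−α} as r → ∞. -/
open MeasureTheory ProbabilityTheory Filter Topology
open scoped NNReal ENNReal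

section Aux

local notation "g" => gaussianPDFReal 0 1

noncomputable def gPhi : ℝ → ℝ := fun t => ∫ x in Set.Iic t, gaussianPDFReal 0 1 x

lemma gInt : Integrable g := integrable_gaussianPDFReal 0 1

lemma gPos (x : ℝ) : 0 < g x := gaussianPDFReal_pos 0 1 x one_ne_zero

lemma gEven (x : ℝ) : g (-x) = g x := by
  simp only [gaussianPDFReal, sub_zero, neg_sq]

lemma gAnti {a b : ℝ} (h : |a| ≤ |b|) : g b ≤ g a := by
  have hab : a ^ 2 ≤ b ^ 2 := by nlinarith [abs_nonneg a, sq_abs a, sq_abs b]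
  unfold gaussianPDFReal
  apply mul_le_mul_of_nonneg_left _ (by positivity)
  apply Real.exp_le_exp.2
  rw [div_le_div_iff_of_pos_right (by norm_num)]
  simp only [sub_zero]
  linarith

lemma gPhi_sub (a b : ℝ) : gPhi b - gPhi a = ∫ x in a..b, g x :=
  intervalIntegral.integral_Iic_sub_Iic gInt.integrableOn gInt.integrableOn

lemma gPhi_mono : StrictMono gPhi := by
  intro a b hab
  have h : 0 < ∫ x in a..b, g x :=
    intervalIntegral.intervalIntegral_pos_of_pos gInt.intervalIntegrable gPos hab
  have := gPhi_sub a b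
  linarith

lemma gPhi_nonneg (t : ℝ) : 0 ≤ gPhi t :=
  setIntegral_nonneg measurableSet_Iic fun x _ => (gPos x).le

lemma gPhi_cont : Continuous gPhi := by
  have h : Continuous fun b => ∫ x in (0:ℝ)..b, g x := gInt.continuous_primitive 0
  have heq : gPhi = fun b => gPhi 0 + ∫ x in (0:ℝ)..b, g x := by
    funext b; rw [← gPhi_sub]; ring
  rw [heq]; exact continuous_const.add h

lemma gPhi_total (t : ℝ) : gPhi t + ∫ x in Set.Ioi t, g x = 1 := by
  rw [gPhi, intervalIntegral.integral_Iic_add_Ioi gInt.integrableOn gInt.integrableOn]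
  exact integral_gaussianPDFReal_eq_one 0 one_ne_zero

lemma gPhi_neg (t : ℝ) : gPhi (-t) = 1 - gPhi t := by
  have h1 : (∫ x in Set.Iic (-t), g (-x)) = ∫ x in Set.Ioi t, g x := by
    simpa using integral_comp_neg_Iic (-t) (gaussianPDFReal 0 1)
  have h2 : gPhi (-t) = ∫ x in Set.Ioi t, g x := by
    rw [← h1]; unfold gPhi; simp_rw [gEven]
  linarith [gPhi_total t]

lemma gmeas (s : Set ℝ) : gaussianReal 0 1 s = ENNReal.ofReal (∫ x in s, g x) :=
  gaussianReal_apply_eq_integral 0 one_ne_zero s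

lemma gPhi_meas (t : ℝ) : gaussianReal 0 1 (Set.Iic t) = ENNReal.ofReal (gPhi t) :=
  gmeas (Set.Iic t)

lemma gPhi_atTop : Tendsto gPhi atTop (𝓝 1) := by
  have h1 : Tendsto (fun t => gaussianReal 0 1 (Set.Iic t)) atTop (𝓝 1) := by
    simpa using tendsto_measure_Iic_atTop (gaussianReal 0 1)
  have h2 : Tendsto (fun t => (gaussianReal 0 1 (Set.Iic t)).toReal) atTop (𝓝 (1:ℝ)) := by
    simpa [Function.comp_def] using (ENNReal.tendsto_toReal (by simp)).comp h1
  have heq : ∀ t, gPhi t = (gaussianReal 0 1 (Set.Iic t)).toReal := fun t => by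
    rw [gPhi_meas, ENNReal.toReal_ofReal (gPhi_nonneg t)]
  exact h2.congr fun t => (heq t).symm

lemma gPhi_atBot : Tendsto gPhi atBot (𝓝 0) := by
  have h1 : Tendsto (fun t : ℝ => gPhi (-t)) atBot (𝓝 1) :=
    gPhi_atTop.comp tendsto_neg_atBot_atTop
  have h2 : Tendsto (fun t : ℝ => 1 - gPhi (-t)) atBot (𝓝 (1 - 1)) :=
    tendsto_const_nhds.sub h1
  have heq : ∀ t : ℝ, gPhi t = 1 - gPhi (-t) := fun t => by
    have := gPhi_neg (-t); rw [neg_neg] at this; linarith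
  have h3 : Tendsto (fun t : ℝ => 1 - gPhi (-t)) atBot (𝓝 0) := by simpa using h2
  exact h3.congr fun t => (heq t).symm

lemma z_spec {q : ℝ} (hq : q ∈ Set.Ioo (0:ℝ) 1) {zq : ℝ}
    (hzq : zq = sInf {t : ℝ | ENNReal.ofReal q ≤ gaussianReal 0 1 (Set.Iic t)}) :
    gPhi zq = q := by
  obtain ⟨a, ha⟩ := (gPhi_atBot.eventually_lt_const hq.1).exists
  obtain ⟨b, hb⟩ := (gPhi_atTop.eventually_const_lt hq.2).exists
  have hab : a ≤ b := (gPhi_mono.lt_iff_lt.1 (ha.trans hb)).le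
  obtain ⟨t₀, _, ht₀⟩ := intermediate_value_Icc hab gPhi_cont.continuousOn
    ⟨ha.le, hb.le⟩
  have hset : {t : ℝ | ENNReal.ofReal q ≤ gaussianReal 0 1 (Set.Iic t)} = Set.Ici t₀ := by
    ext t
    simp only [Set.mem_setOf_eq, Set.mem_Ici, gPhi_meas]
    rw [ENNReal.ofReal_le_ofReal_iff (gPhi_nonneg t), ← ht₀, gPhi_mono.le_iff_le]
  rw [hzq, hset, csInf_Ici, ht₀]

lemma shift_ineq {t r : ℝ} (ht : 0 ≤ t) (hr : 0 ≤ r) :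
    gPhi (t - r) - gPhi (-t - r) ≤ gPhi t - gPhi (-t) := by
  have e1 : gPhi t - gPhi (t - r) = ∫ x in t..(t + r), g (2 * t - x) := by
    have h := intervalIntegral.integral_comp_sub_left (a := t) (b := t + r)
      (gaussianPDFReal 0 1) (2 * t)
    rw [show 2 * t - (t + r) = t - r by ring, show 2 * t - t = t by ring] at h
    rw [h, ← gPhi_sub]
  have e2 : gPhi (-t) - gPhi (-t - r) = ∫ x in t..(t + r), g (-x) := by
    have h := intervalIntegral.integral_comp_neg (a := t) (b := t + r) (gaussianPDFReal 0 1)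
    rw [show -(t + r) = -t - r by ring] at h
    rw [h, ← gPhi_sub]
  have e2' : gPhi (-t) - gPhi (-t - r) = ∫ x in t..(t + r), g x := by
    rw [e2]; simp_rw [gEven]
  have int2 : IntervalIntegrable (fun x => g (2 * t - x)) volume t (t + r) := by
    have h := (gInt.intervalIntegrable (a := t) (b := t - r)).comp_sub_left (2 * t)
    rwa [show 2 * t - t = t by ring, show 2 * t - (t - r) = t + r by ring] at h
  have e3 : (∫ x in t..(t + r), g x) ≤ ∫ x in t..(t + r), g (2 * t - x) := by
    apply intervalIntegral.integral_mono_on (by linarith) gInt.intervalIntegrable int2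
    intro x hx
    apply gAnti
    rw [abs_of_nonneg (by linarith [hx.1] : (0:ℝ) ≤ x), abs_le]
    constructor <;> linarith [hx.1]
  linarith

end Aux

/-- Bounds for the folded normal critical value: for `r ≥ 0`,
`max (r + z_{1−α}) z_{1−α/2} ≤ cv_{1−α}(r) ≤ r + z_{1−α/2}`, and
`cv_{1−α}(r) − r → z_{1−α}` as `r → ∞`, where `z_q` is the `q`-quantile of a
standard normal. -/
theorem folded_normal_cv_bounds
    (α : ℝ) (hα : α ∈ Set.Ioo (0 : ℝ) 1)
    (z : ℝ → ℝ)
    (hz : ∀ q : ℝ, z q = sInf {t : ℝ |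
      ENNReal.ofReal q ≤ gaussianReal 0 1 (Set.Iic t)})
    (cv : ℝ → ℝ)
    (hcv : ∀ r : ℝ, cv r = sInf {t : ℝ |
      ENNReal.ofReal (1 - α) ≤ gaussianReal 0 1 {x : ℝ | |x + r| ≤ t}}) :
    (∀ r : ℝ, 0 ≤ r →
      cv r ≤ r + z (1 - α / 2) ∧ max (r + z (1 - α)) (z (1 - α / 2)) ≤ cv r) ∧
    Tendsto (fun r : ℝ => cv r - r) atTop (𝓝 (z (1 - α))) := by
  obtain ⟨hα0, hα1⟩ := hα
  have hq1 : gPhi (z (1 - α)) = 1 - α :=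
    z_spec ⟨by linarith, by linarith⟩ (hz _)
  have hq2 : gPhi (z (1 - α / 2)) = 1 - α / 2 :=
    z_spec ⟨by linarith, by linarith⟩ (hz _)
  set z₁ := z (1 - α) with hz₁
  set z₂ := z (1 - α / 2) with hz₂
  have half : gPhi 0 = 1 / 2 := by
    have := gPhi_neg 0; rw [neg_zero] at this; linarith
  have hz₂0 : 0 ≤ z₂ := by
    have h : gPhi 0 ≤ gPhi z₂ := by rw [hq2, half]; linarith
    exact gPhi_mono.le_iff_le.1 h
  have hset : ∀ r t : ℝ, {x : ℝ | |x + r| ≤ t} = Set.Icc (-t - r) (t - r) := by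
    intro r t; ext x
    simp only [Set.mem_setOf_eq, Set.mem_Icc, abs_le]
    constructor <;> rintro ⟨h1, h2⟩ <;> constructor <;> linarith
  have hmeas : ∀ r t : ℝ, 0 ≤ t → gaussianReal 0 1 {x : ℝ | |x + r| ≤ t}
      = ENNReal.ofReal (gPhi (t - r) - gPhi (-t - r)) := by
    intro r t ht
    rw [hset, gmeas]
    congr 1
    rw [integral_Icc_eq_integral_Ioc, ← intervalIntegral.integral_of_le (by linarith),
      ← gPhi_sub]
  have hmem : ∀ r t : ℝ, 0 ≤ t →
      ((ENNReal.ofReal (1 - α) ≤ gaussianReal 0 1 {x : ℝ | |x + r| ≤ t}) ↔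
        1 - α ≤ gPhi (t - r) - gPhi (-t - r)) := by
    intro r t ht
    rw [hmeas r t ht, ENNReal.ofReal_le_ofReal_iff]
    have h : gPhi (-t - r) ≤ gPhi (t - r) := gPhi_mono.monotone (by linarith)
    linarith
  have hnonneg : ∀ r t : ℝ,
      ENNReal.ofReal (1 - α) ≤ gaussianReal 0 1 {x : ℝ | |x + r| ≤ t} → 0 ≤ t := by
    intro r t h
    by_contra h'
    push_neg at h'
    rw [hset, Set.Icc_eq_empty (not_le.mpr (by linarith)), measure_empty] at h
    have hpos : (0:ℝ≥0∞) < ENNReal.ofReal (1 - α) :=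
      ENNReal.ofReal_pos.2 (by linarith)
    exact lt_irrefl 0 (hpos.trans_le h)
  have hbdd : ∀ r : ℝ, BddBelow {t : ℝ |
      ENNReal.ofReal (1 - α) ≤ gaussianReal 0 1 {x : ℝ | |x + r| ≤ t}} :=
    fun r => ⟨0, fun t ht => hnonneg r t ht⟩
  have hub_mem : ∀ r : ℝ, 0 ≤ r → (r + z₂) ∈ {t : ℝ |
      ENNReal.ofReal (1 - α) ≤ gaussianReal 0 1 {x : ℝ | |x + r| ≤ t}} := by
    intro r hr
    have ht : (0:ℝ) ≤ r + z₂ := by linarith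
    refine (hmem r _ ht).2 ?_
    have m : gPhi (-(r + z₂) - r) ≤ gPhi (-z₂) := gPhi_mono.monotone (by linarith)
    have hn : gPhi (-z₂) = 1 - gPhi z₂ := gPhi_neg z₂
    rw [show r + z₂ - r = z₂ by ring]
    linarith [hq2]
  have main : ∀ r : ℝ, 0 ≤ r →
      cv r ≤ r + z₂ ∧ max (r + z₁) z₂ ≤ cv r := by
    intro r hr
    constructor
    · rw [hcv]; exact csInf_le (hbdd r) (hub_mem r hr)
    · rw [hcv]
      apply le_csInf ⟨_, hub_mem r hr⟩
      intro t ht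
      have ht0 : 0 ≤ t := hnonneg r t ht
      have h1 : 1 - α ≤ gPhi (t - r) - gPhi (-t - r) := (hmem r t ht0).1 ht
      have hnn : 0 ≤ gPhi (-t - r) := gPhi_nonneg _
      apply max_le
      · have h2 : gPhi z₁ ≤ gPhi (t - r) := by rw [hq1]; linarith
        have := gPhi_mono.le_iff_le.1 h2
        linarith
      · have hsh := shift_ineq ht0 hr
        have hnt := gPhi_neg t
        have h2 : gPhi z₂ ≤ gPhi t := by rw [hq2]; linarith
        exact gPhi_mono.le_iff_le.1 h2
  refine ⟨main, ?_⟩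
  rw [tendsto_order]
  constructor
  · intro a ha
    filter_upwards [eventually_ge_atTop (0:ℝ)] with r hr
    have h := le_trans (le_max_left (r + z₁) z₂) (main r hr).2
    linarith
  · intro b hb
    set ε := (b - z₁) / 2 with hε
    have hε0 : 0 < ε := by rw [hε]; linarith
    have hδ : 0 < gPhi (z₁ + ε) - (1 - α) := by
      have h := gPhi_mono (show z₁ < z₁ + ε by linarith)
      linarith [hq1]
    have htd : Tendsto (fun r : ℝ => gPhi (-(r + z₁ + ε) - r)) atTop (𝓝 0) := by
      apply gPhi_atBot.comp
      have h2r : Tendsto (fun r : ℝ => -(2 * r)) atTop atBot :=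
        tendsto_neg_atTop_atBot.comp (tendsto_id.const_mul_atTop two_pos)
      have heq : (fun r : ℝ => -(r + z₁ + ε) - r) = fun r => (-(z₁ + ε)) + -(2 * r) := by
        funext r; ring
      rw [heq]
      exact tendsto_atBot_add_const_left _ _ h2r
    have hev := htd.eventually_lt_const hδ
    filter_upwards [hev, eventually_ge_atTop (0:ℝ), eventually_ge_atTop (-(z₁ + ε))]
      with r h1 h2 h3
    have ht0 : (0:ℝ) ≤ r + z₁ + ε := by linarith
    have hmemt : (r + z₁ + ε) ∈ {t : ℝ |
        ENNReal.ofReal (1 - α) ≤ gaussianReal 0 1 {x : ℝ | |x + r| ≤ t}} := by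
      refine (hmem r _ ht0).2 ?_
      rw [show r + z₁ + ε - r = z₁ + ε by ring]
      linarith
    have hle : cv r ≤ r + z₁ + ε := by rw [hcv]; exact csInf_le (hbdd r) hmemt
    have : z₁ + ε < b := by rw [hε]; linarith
    linarith
end
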